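/- arXiv:2306.13604 — 7 statements merged into one kernel-verified Lean document; each statement's English description precedes it below -/
import Mathlib

section
/- The map (x,y) ↦ ((1−y)/(1−x), y, 1−x, x/y, (y−x)/((1−x)·y)) is a bijection from the set D = {(x,y) ∈ ℂ² : x·y·(1−x)·(1−y)·(y−x) ≠ 0} onto the set of all u ∈ ℂ⁵ with u1,...,u5 all nonzero satisfying the M0,5 u-equations; the inverse sends such a u to (1−u3, u2). -/
/-!
Put `x = 1 - u₃` and `y = u₂`. The first three u-equations say exactly
`x = y u₄`, `1 - y = (1 - x) u₁` and `y - x = y (1 - x) u₅`, so a point of `Uset` is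
determined by `(x, y)`, and its coordinates are nonzero precisely when these products are,
i.e. when `(x, y) ∈ Dset`. Conversely, the five u-equations hold for the cross-ratio map
as identities of rational functions in `x` and `y`.
-/

/-- The domain: pairs `(x,y)` with `x·y·(1−x)·(1−y)·(y−x) ≠ 0`. -/
def Dset : Set (ℂ × ℂ) :=
  {p | p.1 * p.2 * (1 - p.1) * (1 - p.2) * (p.2 - p.1) ≠ 0}

/-- The set of `u ∈ ℂ⁵` with all coordinates nonzero satisfying the `M_{0,5}` u-equations. -/
def Uset : Set (ℂ × ℂ × ℂ × ℂ × ℂ) :=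
  {u | u.1 ≠ 0 ∧ u.2.1 ≠ 0 ∧ u.2.2.1 ≠ 0 ∧ u.2.2.2.1 ≠ 0 ∧ u.2.2.2.2 ≠ 0 ∧
    u.1 * u.2.2.1 + u.2.1 = 1 ∧
    u.2.1 * u.2.2.2.1 + u.2.2.1 = 1 ∧
    u.2.2.1 * u.2.2.2.2 + u.2.2.2.1 = 1 ∧
    u.2.2.2.1 * u.1 + u.2.2.2.2 = 1 ∧
    u.2.2.2.2 * u.2.1 + u.1 = 1}

/-- The cross-ratio map `(x,y) ↦ (u1,u2,u3,u4,u5)`. -/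
noncomputable def crossRatioMap (p : ℂ × ℂ) : ℂ × ℂ × ℂ × ℂ × ℂ :=
  ((1 - p.2) / (1 - p.1), p.2, 1 - p.1, p.1 / p.2, (p.2 - p.1) / ((1 - p.1) * p.2))

/-- The inverse map `u ↦ (1 − u3, u2)`. -/
def invMap (u : ℂ × ℂ × ℂ × ℂ × ℂ) : ℂ × ℂ := (1 - u.2.2.1, u.2.1)

lemma factorizations_of_u_equations {u₁ u₂ u₃ u₄ u₅ : ℂ} (e₁ : u₁ * u₃ + u₂ = 1)
    (e₂ : u₂ * u₄ + u₃ = 1) (e₃ : u₃ * u₅ + u₄ = 1) :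
    1 - u₃ = u₂ * u₄ ∧ 1 - u₂ = u₁ * u₃ ∧ u₂ - (1 - u₃) = u₂ * (u₃ * u₅) :=
  ⟨by linear_combination -e₂, by linear_combination -e₁,
    by linear_combination e₂ - u₂ * e₃⟩

lemma crossRatioMap_mapsTo : Set.MapsTo crossRatioMap Dset Uset := by
  rintro ⟨x, y⟩ hp
  simp only [Dset, Set.mem_ofPred_eq, mul_ne_zero_iff] at hp
  obtain ⟨⟨⟨⟨hx, hy⟩, h1x⟩, h1y⟩, hyx⟩ := hp
  refine ⟨div_ne_zero h1y h1x, hy, h1x, div_ne_zero hx hy,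
    div_ne_zero hyx (mul_ne_zero h1x hy), ?_, ?_, ?_, ?_, ?_⟩ <;>
  · simp only [crossRatioMap]
    field_simp
    try ring

lemma invMap_mapsTo : Set.MapsTo invMap Uset Dset := by
  rintro ⟨u₁, u₂, u₃, u₄, u₅⟩ ⟨h₁, h₂, h₃, h₄, h₅, e₁, e₂, e₃, -, -⟩
  dsimp only at *
  obtain ⟨f₁, f₂, f₃⟩ := factorizations_of_u_equations e₁ e₂ e₃
  simp only [Dset, invMap, Set.mem_ofPred_eq, sub_sub_cancel]
  rw [f₃, f₂, f₁]
  positivity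

lemma invMap_invOn_crossRatioMap : Set.InvOn invMap crossRatioMap Dset Uset := by
  constructor
  · rintro ⟨x, y⟩ -
    simp [invMap, crossRatioMap]
  · rintro ⟨u₁, u₂, u₃, u₄, u₅⟩ ⟨h₁, h₂, h₃, h₄, h₅, e₁, e₂, e₃, -, -⟩
    dsimp only at *
    obtain ⟨f₁, f₂, f₃⟩ := factorizations_of_u_equations e₁ e₂ e₃
    simp only [crossRatioMap, invMap, sub_sub_cancel]
    rw [f₃, f₂, f₁]
    ext <;> field_simp

/-- The cross-ratio map is a bijection from `Dset` onto `Uset`, with inverse `invMap`. -/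
theorem stmt1 :
    Set.BijOn crossRatioMap Dset Uset ∧ Set.InvOn invMap crossRatioMap Dset Uset :=
  ⟨invMap_invOn_crossRatioMap.bijOn crossRatioMap_mapsTo invMap_mapsTo,
    invMap_invOn_crossRatioMap⟩
end

section
/- The set of sign vectors (sign(u1),...,sign(u5)) realized by real vectors u ∈ (ℝ∖{0})⁵ satisfying the M0,5 u-equations is exactly the following set of 12 of the 32 possible sign vectors: (+,+,+,+,+), (−,+,+,+,+), (+,−,+,+,+), (+,+,−,+,+), (+,+,+,−,+), (+,+,+,+,−), (−,−,−,−,−), (+,−,+,−,+), (+,+,−,+,−), (−,+,+,−,+), (+,−,+,+,−), (−,+,−,+,+). That is, every such u has sign vector in this list, and each of the 12 listed sign vectors is realized by some such u. -/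
/-!
Each u-equation says `u i * u (i + 2) = 1 - u (i + 1)`, so two cyclically adjacent negative
coordinates force the next one to be negative, and by propagation around the pentagon all five
are negative. Otherwise the negative coordinates are pairwise non-adjacent on the 5-cycle, hence
at most two of them: these sign vectors are exactly the twelve listed, and each is realized by an
explicit rational solution.
-/

theorem neg_of_mul_add_eq_one {R : Type*} [CommRing R] [LinearOrder R] [IsStrictOrderedRing R]
    {a b c : R} (h : a * c + b = 1) (ha : a < 0) (hb : b < 0) : c < 0 :=
  neg_of_mul_pos_right (by linarith) ha.le

def IsUSolution (u1 u2 u3 u4 u5 : ℝ) : Prop :=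
  u1 * u3 + u2 = 1 ∧ u2 * u4 + u3 = 1 ∧ u3 * u5 + u4 = 1 ∧ u4 * u1 + u5 = 1 ∧ u5 * u2 + u1 = 1

namespace IsUSolution

variable {u1 u2 u3 u4 u5 : ℝ}

theorem rotate (h : IsUSolution u1 u2 u3 u4 u5) : IsUSolution u2 u3 u4 u5 u1 :=
  ⟨h.2.1, h.2.2.1, h.2.2.2.1, h.2.2.2.2, h.1⟩

theorem all_neg_of_neg_of_neg (h : IsUSolution u1 u2 u3 u4 u5) (h1 : u1 < 0) (h2 : u2 < 0) :
    u1 < 0 ∧ u2 < 0 ∧ u3 < 0 ∧ u4 < 0 ∧ u5 < 0 :=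
  have h3 := neg_of_mul_add_eq_one h.1 h1 h2
  have h4 := neg_of_mul_add_eq_one h.2.1 h2 h3
  ⟨h1, h2, h3, h4, neg_of_mul_add_eq_one h.2.2.1 h3 h4⟩

theorem pos_or_pos_of_not_all_neg (h : IsUSolution u1 u2 u3 u4 u5) (h1 : u1 ≠ 0) (h2 : u2 ≠ 0)
    (hneg : ¬(u1 < 0 ∧ u2 < 0 ∧ u3 < 0 ∧ u4 < 0 ∧ u5 < 0)) : 0 < u1 ∨ 0 < u2 := by
  by_contra! hle
  exact hneg (h.all_neg_of_neg_of_neg (hle.1.lt_of_ne h1) (hle.2.lt_of_ne h2))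

theorem all_neg_or_adjacent_pos (h : IsUSolution u1 u2 u3 u4 u5)
    (h1 : u1 ≠ 0) (h2 : u2 ≠ 0) (h3 : u3 ≠ 0) (h4 : u4 ≠ 0) (h5 : u5 ≠ 0) :
    (u1 < 0 ∧ u2 < 0 ∧ u3 < 0 ∧ u4 < 0 ∧ u5 < 0) ∨
      ((0 < u1 ∨ 0 < u2) ∧ (0 < u2 ∨ 0 < u3) ∧ (0 < u3 ∨ 0 < u4) ∧ (0 < u4 ∨ 0 < u5) ∧
        (0 < u5 ∨ 0 < u1)) := by
  refine or_iff_not_imp_left.2 fun hneg => ⟨?_, ?_, ?_, ?_, ?_⟩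
  · exact h.pos_or_pos_of_not_all_neg h1 h2 hneg
  · exact h.rotate.pos_or_pos_of_not_all_neg h2 h3 (by tauto)
  · exact h.rotate.rotate.pos_or_pos_of_not_all_neg h3 h4 (by tauto)
  · exact h.rotate.rotate.rotate.pos_or_pos_of_not_all_neg h4 h5 (by tauto)
  · exact h.rotate.rotate.rotate.rotate.pos_or_pos_of_not_all_neg h5 h1 (by tauto)

end IsUSolution

/-- The set of sign vectors (with `true` = positive, `false` = negative) realized by
real solutions with all coordinates nonzero of the `M_{0,5}` u-equations is exactly the
stated list of 12 sign vectors. -/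
theorem stmt2 :
    {s : Bool × Bool × Bool × Bool × Bool |
      ∃ u1 u2 u3 u4 u5 : ℝ,
        u1 ≠ 0 ∧ u2 ≠ 0 ∧ u3 ≠ 0 ∧ u4 ≠ 0 ∧ u5 ≠ 0 ∧
        u1 * u3 + u2 = 1 ∧ u2 * u4 + u3 = 1 ∧ u3 * u5 + u4 = 1 ∧
        u4 * u1 + u5 = 1 ∧ u5 * u2 + u1 = 1 ∧
        (s.1 = true ↔ 0 < u1) ∧ (s.2.1 = true ↔ 0 < u2) ∧ (s.2.2.1 = true ↔ 0 < u3) ∧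
        (s.2.2.2.1 = true ↔ 0 < u4) ∧ (s.2.2.2.2 = true ↔ 0 < u5)} =
    {(true, true, true, true, true), (false, true, true, true, true),
     (true, false, true, true, true), (true, true, false, true, true),
     (true, true, true, false, true), (true, true, true, true, false),
     (false, false, false, false, false), (true, false, true, false, true),
     (true, true, false, true, false), (false, true, true, false, true),
     (true, false, true, true, false), (false, true, false, true, true)} := by
  ext ⟨a, b, c, d, e⟩
  simp only [Set.mem_ofPred_eq, Set.mem_insert_iff, Set.mem_singleton_iff, Prod.mk.injEq]
  constructor
  · rintro ⟨u1, u2, u3, u4, u5, n1, n2, n3, n4, n5, e1, e2, e3, e4, e5, s1, s2, s3, s4, s5⟩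
    rcases IsUSolution.all_neg_or_adjacent_pos ⟨e1, e2, e3, e4, e5⟩ n1 n2 n3 n4 n5 with
      ⟨h1, h2, h3, h4, h5⟩ | hpos
    · simp only [h1.not_gt, h2.not_gt, h3.not_gt, h4.not_gt, h5.not_gt, iff_false,
        Bool.not_eq_true] at s1 s2 s3 s4 s5
      simp [s1, s2, s3, s4, s5]
    · rw [← s1, ← s2, ← s3, ← s4, ← s5] at hpos
      revert hpos
      cases a <;> cases b <;> cases c <;> cases d <;> cases e <;> simp
  · rintro (h | h | h | h | h | h | h | h | h | h | h | h) <;>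
      obtain ⟨rfl, rfl, rfl, rfl, rfl⟩ := h
    · exact ⟨1/2, 3/4, 1/2, 2/3, 2/3, by norm_num⟩
    · exact ⟨-1, 3/2, 1/2, 1/3, 4/3, by norm_num⟩
    · exact ⟨2, -3, 2, 1/3, 1/3, by norm_num⟩
    · exact ⟨1/2, 3/2, -1, 4/3, 1/3, by norm_num⟩
    · exact ⟨1/4, 1/2, 2, -2, 3/2, by norm_num⟩
    · exact ⟨2, 1/2, 1/4, 3/2, -2, by norm_num⟩
    · exact ⟨-2, -3, -2, -1, -1, by norm_num⟩
    · exact ⟨3, -1/2, 1/2, -1, 4, by norm_num⟩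
    · exact ⟨2, 3, -1, 2/3, -1/3, by norm_num⟩
    · exact ⟨-1, 3, 2, -1/3, 2/3, by norm_num⟩
    · exact ⟨1/2, -1, 4, 3, -1/2, by norm_num⟩
    · exact ⟨-1/2, 3/4, -1/2, 2, 2, by norm_num⟩
end

section
/- Let u ∈ ℝ⁵ satisfy the M0,5 u-equations with u_i ≥ 0 for all i. Then 0 ≤ u_i ≤ 1 for all i, and for each index i (taken cyclically modulo 5): if u_i = 0 then u_{i−1} = u_{i+1} = 1 and u_{i+2} + u_{i−2} = 1 with u_{i+2}, u_{i−2} ≥ 0. In particular, if u2 = 0 then u1 = u3 = 1 and u4 + u5 = 1. -/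
/-!
Each u-equation `u_{i-1} u_{i+1} + u_i = 1` writes `u_i` as `1` minus a product of
nonnegative numbers, so `u_i ≤ 1`. If `u_i = 0`, the equation of index `i` collapses to
`u_{i+1} = 1`, and substituting this into the equations of indices `i - 1` and `i + 1` gives
`u_{i-1} = 1` and `u_{i+2} + u_{i+3} = 1`.
-/

theorem le_one_of_mul_add_eq_one {a b c : ℝ} (ha : 0 ≤ a) (hc : 0 ≤ c) (h : a * c + b = 1) :
    b ≤ 1 := by
  nlinarith [mul_nonneg ha hc]

theorem eq_one_and_add_eq_one_of_eq_zero {a b c d e : ℝ} (hab : a * c + b = 1)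
    (hbc : b * d + c = 1) (hcd : c * e + d = 1) (hb : b = 0) :
    a = 1 ∧ c = 1 ∧ d + e = 1 := by
  have hc : c = 1 := by simpa [hb] using hbc
  subst hb hc
  exact ⟨by linarith, rfl, by linarith⟩

section UEquations

variable {u : Fin 5 → ℝ} (heq : ∀ i : Fin 5, u i * u (i + 2) + u (i + 1) = 1)
include heq

theorem uEquations_le_one (hpos : ∀ i : Fin 5, 0 ≤ u i) (i : Fin 5) : u i ≤ 1 := by
  have h := heq (i + 4)
  rw [show i + 4 + 2 = i + 1 by grind, show i + 4 + 1 = i by grind] at h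
  exact le_one_of_mul_add_eq_one (hpos _) (hpos _) h

theorem uEquations_of_eq_zero {i : Fin 5} (hi : u i = 0) :
    u (i + 4) = 1 ∧ u (i + 1) = 1 ∧ u (i + 2) + u (i + 3) = 1 := by
  have h₀ := heq (i + 4)
  have h₂ := heq (i + 1)
  rw [show i + 4 + 2 = i + 1 by grind, show i + 4 + 1 = i by grind] at h₀
  rw [show i + 1 + 2 = i + 3 by grind, show i + 1 + 1 = i + 2 by grind] at h₂
  exact eq_one_and_add_eq_one_of_eq_zero h₀ (heq i) h₂ hi

end UEquations

/-- Nonnegative real solutions of the (cyclic) `M_{0,5}` u-equations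
`u_i · u_{i+2} + u_{i+1} = 1` lie in `[0,1]⁵`; if some `u_i = 0` then its two cyclic
neighbors equal `1`, and the remaining two coordinates are nonnegative and sum to `1`.
Here `u 0, …, u 4` stand for `u1, …, u5`, and indices are cyclic modulo 5
(so `i − 1 = i + 4` and `i − 2 = i + 3`). -/
theorem stmt3 (u : Fin 5 → ℝ)
    (heq : ∀ i : Fin 5, u i * u (i + 2) + u (i + 1) = 1)
    (hpos : ∀ i : Fin 5, 0 ≤ u i) :
    (∀ i : Fin 5, 0 ≤ u i ∧ u i ≤ 1) ∧
    (∀ i : Fin 5, u i = 0 →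
      u (i + 4) = 1 ∧ u (i + 1) = 1 ∧ u (i + 2) + u (i + 3) = 1 ∧
      0 ≤ u (i + 2) ∧ 0 ≤ u (i + 3)) ∧
    (u 1 = 0 → u 0 = 1 ∧ u 2 = 1 ∧ u 3 + u 4 = 1) := by
  refine ⟨fun i => ⟨hpos i, uEquations_le_one heq hpos i⟩, fun i hi => ?_,
    uEquations_of_eq_zero heq (i := 1)⟩
  obtain ⟨hprev, hnext, hsum⟩ := uEquations_of_eq_zero heq hi
  exact ⟨hprev, hnext, hsum, hpos _, hpos _⟩
end

section
/- A vector v ∈ ℝ⁵ satisfies the five tropical equations min(v_i + v_{i+2}, v_{i+1}) = 0 for all i ∈ ℤ/5 (indices cyclic modulo 5, i.e. min(v1+v3,v2) = min(v2+v4,v3) = min(v3+v5,v4) = min(v4+v1,v5) = min(v5+v2,v1) = 0) if and only if there exist an index i ∈ ℤ/5 and real numbers a, b ≥ 0 such that v = a·e_i + b·e_{i+2}, where e_1,...,e_5 are the standard basis vectors of ℝ⁵. Thus the solution set is a cone over a pentagon: the union of the five two-dimensional cones spanned by {e_i, e_{i+2}}. -/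
/-!
The equation at `i - 1` bounds `v i` from below by `0`, and once all entries are nonnegative
`min (v i + v (i + 2)) (v (i + 1)) = 0` says exactly that no two cyclically adjacent entries are
both nonzero. So the support of `v` is an independent set of the 5-cycle, and the maximal such
sets are the pairs `{i, i + 2}`.
-/

theorem min_add_eq_zero_iff {α : Type*} [AddCommMonoid α] [LinearOrder α] [IsOrderedAddMonoid α]
    {a b c : α} (ha : 0 ≤ a) (hb : 0 ≤ b) (hc : 0 ≤ c) :
    min (a + c) b = 0 ↔ (a = 0 ∧ c = 0) ∨ b = 0 := by
  rw [min_eq_iff, add_eq_zero_iff_of_nonneg ha hc]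
  constructor
  · rintro (⟨h, -⟩ | ⟨h, -⟩)
    exacts [.inl h, .inr h]
  · rintro (⟨rfl, rfl⟩ | rfl)
    exacts [.inl ⟨by simp, by simpa using hb⟩, .inr ⟨rfl, add_nonneg ha hc⟩]

theorem cyclic_min_eq_zero_iff {α : Type*} [AddCommMonoid α] [LinearOrder α]
    [IsOrderedAddMonoid α] {n : ℕ} [NeZero n] (v : Fin n → α) :
    (∀ i, min (v i + v (i + 2)) (v (i + 1)) = 0) ↔
      (∀ i, 0 ≤ v i) ∧ ∀ i, v i = 0 ∨ v (i + 1) = 0 := by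
  constructor
  · intro h
    have hnonneg (i : Fin n) : 0 ≤ v i := by
      simpa using (h (i - 1)).symm.trans_le (min_le_right _ _)
    refine ⟨hnonneg, fun i => ?_⟩
    rcases (min_add_eq_zero_iff (hnonneg _) (hnonneg _) (hnonneg _)).mp (h i) with ⟨h0, -⟩ | h1
    exacts [.inl h0, .inr h1]
  · rintro ⟨hnonneg, hadj⟩ i
    rw [min_add_eq_zero_iff (hnonneg _) (hnonneg _) (hnonneg _), or_iff_not_imp_right]
    intro hi
    refine ⟨(hadj i).resolve_right hi, ?_⟩
    have htwo : i + 1 + 1 = i + 2 := by ext; simp [Fin.val_add]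
    simpa [htwo, hi] using hadj (i + 1)

theorem Fin.five_cases (i j : Fin 5) :
    j = i ∨ j = i + 1 ∨ j = i + 2 ∨ j = i + 3 ∨ j = i + 4 := by
  omega

theorem adjacent_zero_iff_exists_support_subset_pair {M : Type*} [Zero M] (v : Fin 5 → M) :
    (∀ i, v i = 0 ∨ v (i + 1) = 0) ↔ ∃ i, ∀ j, j ≠ i → j ≠ i + 2 → v j = 0 := by
  constructor
  · intro hadj
    by_cases hzero : ∀ j, v j = 0
    · exact ⟨0, fun j _ _ => hzero j⟩
    obtain ⟨i, hi⟩ := not_forall.mp hzero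
    have hprev : v (i + 4) = 0 := (hadj (i + 4)).resolve_right (by simpa [add_assoc] using hi)
    have hnext : v (i + 1) = 0 := (hadj i).resolve_left hi
    rcases hadj (i + 2) with h2 | h3
    · refine ⟨i + 3, fun j hj₀ hj₂ => ?_⟩
      rcases Fin.five_cases i j with rfl | rfl | rfl | rfl | rfl <;> first | assumption | omega
    · replace h3 : v (i + 3) = 0 := by simpa [add_assoc] using h3
      refine ⟨i, fun j hj₀ hj₂ => ?_⟩
      rcases Fin.five_cases i j with rfl | rfl | rfl | rfl | rfl <;> first | assumption | omega
  · rintro ⟨i, hi⟩ j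
    by_cases hj : j = i ∨ j = i + 2
    · exact .inr (hi _ (by omega) (by omega))
    · exact .inl (hi j (by tauto) (by tauto))

theorem eq_add_of_support_subset_pair {ι R : Type*} [DecidableEq ι] [Semiring R] (v : ι → R)
    {i k : ι} (hik : i ≠ k) (hv : ∀ j, j ≠ i → j ≠ k → v j = 0) :
    v = fun j => v i * (if j = i then 1 else 0) + v k * (if j = k then 1 else 0) := by
  funext j
  by_cases hji : j = i
  · subst hji; simp [hik]
  by_cases hjk : j = k
  · subst hjk; simp [hji]
  simp [hji, hjk, hv j hji hjk]

/-- A vector `v ∈ ℝ⁵` satisfies the five cyclic tropical equations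
`min(v_i + v_{i+2}, v_{i+1}) = 0` if and only if `v = a·e_i + b·e_{i+2}` for some
cyclic index `i` and nonnegative reals `a`, `b`: the solution set is the cone over a
pentagon, namely the union of the five 2-dimensional cones spanned by `{e_i, e_{i+2}}`. -/
theorem stmt4 (v : Fin 5 → ℝ) :
    (∀ i : Fin 5, min (v i + v (i + 2)) (v (i + 1)) = 0) ↔
    ∃ (i : Fin 5) (a b : ℝ), 0 ≤ a ∧ 0 ≤ b ∧
      v = fun j => a * (if j = i then 1 else 0) + b * (if j = i + 2 then 1 else 0) := by
  rw [cyclic_min_eq_zero_iff, adjacent_zero_iff_exists_support_subset_pair]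
  constructor
  · rintro ⟨hnonneg, i, hi⟩
    exact ⟨i, v i, v (i + 2), hnonneg i, hnonneg (i + 2),
      eq_add_of_support_subset_pair v (by omega) hi⟩
  · rintro ⟨i, a, b, ha, hb, rfl⟩
    exact ⟨fun j => by positivity, i, fun j h₀ h₂ => by simp [h₀, h₂]⟩
end

section
/- Let s1, s2, s3, s4, s5 be positive real numbers. Consider the likelihood equations s1/x − s3/(1−x) − s5/(y−x) = 0 and s2/y − s4/(1−y) + s5/(y−x) = 0 on the domain of points with x, y, 1−x, 1−y, y−x all nonzero. Then there is exactly one solution in the open triangle {(x,y) ∈ ℝ² : 0 < x < y < 1}, exactly one solution in the open triangle {(x,y) ∈ ℝ² : 0 < y < x < 1}, and every complex solution (x,y) ∈ ℂ² (with x, y, 1−x, 1−y, y−x nonzero) is one of these two real solutions. -/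
/-!
Clearing denominators, the first equation says `(y - x) (s1 - (s1 + s3) x) = s5 x (1 - x)`, so
`y` is a rational function of `x`; substituting it into the second equation leaves, after
cancelling the nonzero factor `s5 x (1 - x)`, a quadratic `likQuad` in `x` alone. Hence every
complex solution has `x` a root of this real quadratic, and `y` is then determined by `x`.
The quadratic is positive at `0` and `1` and negative at `s1 / (s1 + s3)`,
`s1 / (s1 + s3 + s5)` and `(s1 + s5) / (s1 + s3 + s5)`, so it has two roots `0 < r₁ < r₂ < 1`
separating these points. The resulting signs of `s1 - (s1 + s3) x`, `s1 - (s1 + s3 + s5) x` and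
`s1 + s5 - (s1 + s3 + s5) x` at the roots put the solution over `r₁` in the triangle `x < y`
and the one over `r₂` in the triangle `y < x`.
-/

theorem quadratic_form_eq_of_vieta {R : Type*} [CommRing R] {a b c r₁ r₂ : R}
    (hb : b = a * (r₁ + r₂)) (hc : c = a * (r₁ * r₂)) (u v : R) :
    a * u ^ 2 - b * u * v + c * v ^ 2 = a * ((u - v * r₁) * (u - v * r₂)) := by
  subst hb hc; ring

theorem exists_vieta_of_quadratic_form_neg {a b c u v : ℝ} (ha : 0 < a)
    (h : a * u ^ 2 - b * u * v + c * v ^ 2 < 0) :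
    ∃ r₁ r₂ : ℝ, r₁ < r₂ ∧ b = a * (r₁ + r₂) ∧ c = a * (r₁ * r₂) := by
  set Δ := b ^ 2 - 4 * a * c
  have hΔ : 0 < Δ := by
    by_contra! hΔ
    nlinarith [sq_nonneg (2 * a * u - b * v), mul_nonpos_of_nonpos_of_nonneg hΔ (sq_nonneg v)]
  have hsq : √Δ ^ 2 = Δ := Real.sq_sqrt hΔ.le
  refine ⟨(b - √Δ) / (2 * a), (b + √Δ) / (2 * a), ?_, ?_, ?_⟩
  · gcongr
    linarith [Real.sqrt_pos.2 hΔ]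
  · field_simp; ring
  · field_simp; linear_combination hsq

theorem sub_mul_pos_and_neg_of_quadratic_form_neg {a b c r₁ r₂ u v : ℝ} (ha : 0 < a)
    (hv : 0 < v) (hr : r₁ < r₂) (hb : b = a * (r₁ + r₂)) (hc : c = a * (r₁ * r₂))
    (h : a * u ^ 2 - b * u * v + c * v ^ 2 < 0) :
    0 < u - v * r₁ ∧ u - v * r₂ < 0 := by
  rw [quadratic_form_eq_of_vieta hb hc] at h
  have hprod : (u - v * r₁) * (u - v * r₂) < 0 := neg_of_mul_neg_right h ha.le
  have hgap : u - v * r₂ < u - v * r₁ := by nlinarith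
  constructor <;> nlinarith

section Likelihood

variable {K : Type*} [Field K]

def IsLikCrit (s1 s2 s3 s4 s5 x y : K) : Prop :=
  s1 / x - s3 / (1 - x) - s5 / (y - x) = 0 ∧ s2 / y - s4 / (1 - y) + s5 / (y - x) = 0

def likQuad (s1 s2 s3 s4 s5 x : K) : K :=
  (s1 + s3 + s5) * (s1 + s2 + s3 + s4 + s5) * x ^ 2
    - ((s1 + s3 + s5) * (2 * s1 + s5) + (s2 + s4) * (s1 + s5) + s2 * (s1 + s3)) * x
    + s1 * (s1 + s2 + s5)

/-- The value of `y` forced by the first likelihood equation. -/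
def likPartner (s1 s3 s5 x : K) : K :=
  x + s5 * x * (1 - x) / (s1 - (s1 + s3) * x)

variable {s1 s2 s3 s4 s5 x y : K}

theorem likEq₁_iff (hx : x ≠ 0) (hx1 : 1 - x ≠ 0) (hyx : y - x ≠ 0) :
    s1 / x - s3 / (1 - x) - s5 / (y - x) = 0 ↔
      (y - x) * (s1 - (s1 + s3) * x) = s5 * x * (1 - x) := by
  rw [div_sub_div _ _ hx hx1, div_sub_div _ _ (mul_ne_zero hx hx1) hyx,
    div_eq_zero_iff, or_iff_left (by positivity)]
  constructor <;> intro h <;> linear_combination h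

theorem likEq₂_iff (hy : y ≠ 0) (hy1 : 1 - y ≠ 0) (hyx : y - x ≠ 0) :
    s2 / y - s4 / (1 - y) + s5 / (y - x) = 0 ↔
      s2 * (1 - y) * (y - x) - s4 * y * (y - x) + s5 * y * (1 - y) = 0 := by
  rw [div_sub_div _ _ hy hy1, div_add_div _ _ (mul_ne_zero hy hy1) hyx,
    div_eq_zero_iff, or_iff_left (by positivity)]
  constructor <;> intro h <;> linear_combination h

theorem eq_likPartner_iff (hs5 : s5 ≠ 0) (hx : x ≠ 0) (hx1 : 1 - x ≠ 0) (hyx : y - x ≠ 0) :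
    (y - x) * (s1 - (s1 + s3) * x) = s5 * x * (1 - x) ↔ y = likPartner s1 s3 s5 x := by
  by_cases hD : s1 - (s1 + s3) * x = 0
  · -- here `likPartner s1 s3 s5 x = x`, as division by zero returns `0`
    have hy : y ≠ x := sub_ne_zero.1 hyx
    simp only [likPartner, hD, mul_zero, div_zero, add_zero, hy, iff_false]
    exact (mul_ne_zero (mul_ne_zero hs5 hx) hx1).symm
  · rw [likPartner, ← sub_eq_iff_eq_add', eq_div_iff hD]

theorem likEq₂_iff_likQuad (hs5 : s5 ≠ 0) (hx : x ≠ 0) (hx1 : 1 - x ≠ 0)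
    (h₁ : (y - x) * (s1 - (s1 + s3) * x) = s5 * x * (1 - x)) :
    s2 * (1 - y) * (y - x) - s4 * y * (y - x) + s5 * y * (1 - y) = 0 ↔
      likQuad s1 s2 s3 s4 s5 x = 0 := by
  have hD : s1 - (s1 + s3) * x ≠ 0 := by
    rintro hD
    rw [hD, mul_zero] at h₁
    exact mul_ne_zero (mul_ne_zero hs5 hx) hx1 h₁.symm
  -- eliminates `y` using the first equation
  have key : (s1 - (s1 + s3) * x) ^ 2
        * (s2 * (1 - y) * (y - x) - s4 * y * (y - x) + s5 * y * (1 - y))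
      = s5 * x * (1 - x) * likQuad s1 s2 s3 s4 s5 x
        + ((s2 + (s2 + s4) * x + s5) * (s1 - (s1 + s3) * x)
          - (s2 + s4 + s5) * ((s1 - (s1 + s3) * x) * y + x * ((s1 + s5) - (s1 + s3 + s5) * x)))
          * ((y - x) * (s1 - (s1 + s3) * x) - s5 * x * (1 - x)) := by
    unfold likQuad; ring
  rw [h₁, sub_self, mul_zero, add_zero] at key
  rw [← mul_eq_zero_iff_left (pow_ne_zero 2 hD), key, mul_eq_zero_iff_left (by positivity)]

theorem isLikCrit_iff (hs5 : s5 ≠ 0) (hx : x ≠ 0) (hx1 : 1 - x ≠ 0) (hy : y ≠ 0)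
    (hy1 : 1 - y ≠ 0) (hyx : y - x ≠ 0) :
    IsLikCrit s1 s2 s3 s4 s5 x y ↔
      likQuad s1 s2 s3 s4 s5 x = 0 ∧ y = likPartner s1 s3 s5 x := by
  rw [IsLikCrit, likEq₁_iff hx hx1 hyx, likEq₂_iff hy hy1 hyx,
    ← eq_likPartner_iff hs5 hx hx1 hyx]
  exact (and_congr_right fun h₁ => likEq₂_iff_likQuad hs5 hx hx1 h₁).trans and_comm

theorem likQuad_eq_zero_iff {r₁ r₂ : K}
    (ha : (s1 + s3 + s5) * (s1 + s2 + s3 + s4 + s5) ≠ 0)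
    (hb : (s1 + s3 + s5) * (2 * s1 + s5) + (s2 + s4) * (s1 + s5) + s2 * (s1 + s3)
      = (s1 + s3 + s5) * (s1 + s2 + s3 + s4 + s5) * (r₁ + r₂))
    (hc : s1 * (s1 + s2 + s5) = (s1 + s3 + s5) * (s1 + s2 + s3 + s4 + s5) * (r₁ * r₂)) :
    likQuad s1 s2 s3 s4 s5 x = 0 ↔ x = r₁ ∨ x = r₂ := by
  have hform := quadratic_form_eq_of_vieta hb hc x 1
  have hfactor : likQuad s1 s2 s3 s4 s5 x
      = (s1 + s3 + s5) * (s1 + s2 + s3 + s4 + s5) * ((x - r₁) * (x - r₂)) := by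
    unfold likQuad; linear_combination hform
  rw [hfactor, mul_eq_zero_iff_left ha, mul_eq_zero, sub_eq_zero, sub_eq_zero]

end Likelihood

section Real

theorem exists_likQuad_roots {s1 s2 s3 s4 s5 : ℝ}
    (h1 : 0 < s1) (h2 : 0 < s2) (h3 : 0 < s3) (h4 : 0 < s4) (h5 : 0 < s5) :
    ∃ r₁ r₂ : ℝ,
      (s1 + s3 + s5) * (2 * s1 + s5) + (s2 + s4) * (s1 + s5) + s2 * (s1 + s3)
        = (s1 + s3 + s5) * (s1 + s2 + s3 + s4 + s5) * (r₁ + r₂) ∧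
      s1 * (s1 + s2 + s5) = (s1 + s3 + s5) * (s1 + s2 + s3 + s4 + s5) * (r₁ * r₂) ∧
      0 < r₁ ∧ r₁ < r₂ ∧ r₂ < 1 ∧
      0 < s1 - (s1 + s3) * r₁ ∧ 0 < s1 - (s1 + s3 + s5) * r₁ ∧
      s1 - (s1 + s3) * r₂ < 0 ∧ (s1 + s5) - (s1 + s3 + s5) * r₂ < 0 := by
  have ha : 0 < (s1 + s3 + s5) * (s1 + s2 + s3 + s4 + s5) := by positivity
  have hm : 0 < s1 + s3 + s5 := by positivity
  obtain ⟨r₁, r₂, hr, hb, hc⟩ := exists_vieta_of_quadratic_form_neg (u := s1) (v := s1 + s3 + s5)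
    (b := (s1 + s3 + s5) * (2 * s1 + s5) + (s2 + s4) * (s1 + s5) + s2 * (s1 + s3))
    (c := s1 * (s1 + s2 + s5)) ha
    (by linarith [show 0 < (s1 + s3 + s5) * s1 * s4 * s5 by positivity])
  obtain ⟨hD₁, hD₂⟩ := sub_mul_pos_and_neg_of_quadratic_form_neg ha (u := s1)
    (by positivity : 0 < s1 + s3) hr hb hc
    (by linarith [show 0 < s1 * s3 * s5 * (s2 + s4 + s5) by positivity])
  obtain ⟨hB₁, -⟩ := sub_mul_pos_and_neg_of_quadratic_form_neg ha (u := s1) hm hr hb hc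
    (by linarith [show 0 < (s1 + s3 + s5) * s1 * s4 * s5 by positivity])
  obtain ⟨-, hA₂⟩ := sub_mul_pos_and_neg_of_quadratic_form_neg ha (u := s1 + s5) hm hr hb hc
    (by linarith [show 0 < (s1 + s3 + s5) * s2 * s3 * s5 by positivity])
  have hr₂ : 0 < r₂ := by nlinarith
  have hr₁ : 0 < r₁ := (pos_iff_pos_of_mul_pos (by nlinarith : 0 < r₁ * r₂)).2 hr₂
  have hr₁' : r₁ < 1 := by nlinarith
  have hr₂' : r₂ < 1 := by
    have h11 := quadratic_form_eq_of_vieta hb hc 1 1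
    have hprod : 0 < (1 - r₁) * (1 - r₂) := by
      refine pos_of_mul_pos_right ?_ ha.le
      linarith [show 0 < s3 * (s3 + s4 + s5) by positivity]
    linarith [(pos_iff_pos_of_mul_pos hprod).1 (sub_pos.2 hr₁')]
  exact ⟨r₁, r₂, hb, hc, hr₁, hr, hr₂', hD₁, hB₁, hD₂, hA₂⟩

variable {s1 s3 s5 x : ℝ}

theorem likPartner_mem_Ioo_self_one (h5 : 0 < s5) (hx : 0 < x) (hx1 : x < 1)
    (hD : 0 < s1 - (s1 + s3) * x) (hB : 0 < s1 - (s1 + s3 + s5) * x) :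
    likPartner s1 s3 s5 x ∈ Set.Ioo x 1 := by
  have h1x : 0 < 1 - x := sub_pos.2 hx1
  have hD' := hD.ne'
  have hgap : 0 < likPartner s1 s3 s5 x - x := by
    rw [likPartner, add_sub_cancel_left]; positivity
  have hcompl : 1 - likPartner s1 s3 s5 x
      = (1 - x) * (s1 - (s1 + s3 + s5) * x) / (s1 - (s1 + s3) * x) := by
    rw [likPartner, eq_div_iff hD', sub_mul, add_mul x, div_mul_cancel₀ _ hD']; ring
  have hcompl_pos : 0 < 1 - likPartner s1 s3 s5 x := by rw [hcompl]; positivity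
  exact ⟨by linarith, by linarith⟩

theorem likPartner_mem_Ioo_zero_self (h5 : 0 < s5) (hx : 0 < x) (hx1 : x < 1)
    (hD : s1 - (s1 + s3) * x < 0) (hA : (s1 + s5) - (s1 + s3 + s5) * x < 0) :
    likPartner s1 s3 s5 x ∈ Set.Ioo 0 x := by
  have h1x : 0 < 1 - x := sub_pos.2 hx1
  have hD' := hD.ne
  have hgap : likPartner s1 s3 s5 x - x < 0 := by
    rw [likPartner, add_sub_cancel_left]
    exact div_neg_of_pos_of_neg (by positivity) hD
  have hval : likPartner s1 s3 s5 x
      = x * ((s1 + s5) - (s1 + s3 + s5) * x) / (s1 - (s1 + s3) * x) := by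
    rw [likPartner, eq_div_iff hD', add_mul x, div_mul_cancel₀ _ hD']; ring
  have hval_pos : 0 < likPartner s1 s3 s5 x := by
    rw [hval]; exact div_pos_of_neg_of_neg (mul_neg_of_pos_of_neg hx hA) hD
  exact ⟨hval_pos, by linarith⟩

end Real

/-- For positive real `s1,…,s5`, the likelihood equations
`s1/x − s3/(1−x) − s5/(y−x) = 0` and `s2/y − s4/(1−y) + s5/(y−x) = 0` have exactly one
solution in each of the two open triangles `0 < x < y < 1` and `0 < y < x < 1`, and every
complex solution (with `x, y, 1−x, 1−y, y−x` nonzero) is one of these two real solutions. -/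
theorem stmt6 (s1 s2 s3 s4 s5 : ℝ)
    (h1 : 0 < s1) (h2 : 0 < s2) (h3 : 0 < s3) (h4 : 0 < s4) (h5 : 0 < s5) :
    (∃! p : ℝ × ℝ, (0 < p.1 ∧ p.1 < p.2 ∧ p.2 < 1) ∧
      s1 / p.1 - s3 / (1 - p.1) - s5 / (p.2 - p.1) = 0 ∧
      s2 / p.2 - s4 / (1 - p.2) + s5 / (p.2 - p.1) = 0) ∧
    (∃! p : ℝ × ℝ, (0 < p.2 ∧ p.2 < p.1 ∧ p.1 < 1) ∧
      s1 / p.1 - s3 / (1 - p.1) - s5 / (p.2 - p.1) = 0 ∧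
      s2 / p.2 - s4 / (1 - p.2) + s5 / (p.2 - p.1) = 0) ∧
    (∀ x y : ℂ, x ≠ 0 → y ≠ 0 → 1 - x ≠ 0 → 1 - y ≠ 0 → y - x ≠ 0 →
      (s1 : ℂ) / x - (s3 : ℂ) / (1 - x) - (s5 : ℂ) / (y - x) = 0 →
      (s2 : ℂ) / y - (s4 : ℂ) / (1 - y) + (s5 : ℂ) / (y - x) = 0 →
      ∃ p : ℝ × ℝ,
        ((0 < p.1 ∧ p.1 < p.2 ∧ p.2 < 1) ∨ (0 < p.2 ∧ p.2 < p.1 ∧ p.1 < 1)) ∧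
        (s1 / p.1 - s3 / (1 - p.1) - s5 / (p.2 - p.1) = 0 ∧
          s2 / p.2 - s4 / (1 - p.2) + s5 / (p.2 - p.1) = 0) ∧
        x = (p.1 : ℂ) ∧ y = (p.2 : ℂ)) := by
  obtain ⟨r₁, r₂, hb, hc, hr₁, hr₁₂, hr₂, hD₁, hB₁, hD₂, hA₂⟩ :=
    exists_likQuad_roots h1 h2 h3 h4 h5
  have ha : 0 < (s1 + s3 + s5) * (s1 + s2 + s3 + s4 + s5) := by positivity
  have hcrit : ∀ x y : ℝ, 0 < x → x < 1 → 0 < y → y < 1 → x ≠ y →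
      (IsLikCrit s1 s2 s3 s4 s5 x y ↔ (x = r₁ ∨ x = r₂) ∧ y = likPartner s1 s3 s5 x) :=
    fun x y hx hx1 hy hy1 hxy => by
      rw [isLikCrit_iff h5.ne' hx.ne' (sub_pos.2 hx1).ne' hy.ne' (sub_pos.2 hy1).ne'
        (sub_ne_zero.2 hxy.symm), likQuad_eq_zero_iff ha.ne' hb hc]
  set y₁ := likPartner s1 s3 s5 r₁
  set y₂ := likPartner s1 s3 s5 r₂
  obtain ⟨hy₁, hy₁'⟩ : y₁ ∈ Set.Ioo r₁ 1 :=
    likPartner_mem_Ioo_self_one h5 hr₁ (hr₁₂.trans hr₂) hD₁ hB₁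
  obtain ⟨hy₂, hy₂'⟩ : y₂ ∈ Set.Ioo 0 r₂ :=
    likPartner_mem_Ioo_zero_self h5 (hr₁.trans hr₁₂) hr₂ hD₂ hA₂
  have hsol₁ : IsLikCrit s1 s2 s3 s4 s5 r₁ y₁ :=
    (hcrit _ _ hr₁ (hr₁₂.trans hr₂) (hr₁.trans hy₁) hy₁' hy₁.ne).2 ⟨.inl rfl, rfl⟩
  have hsol₂ : IsLikCrit s1 s2 s3 s4 s5 r₂ y₂ :=
    (hcrit _ _ (hr₁.trans hr₁₂) hr₂ hy₂ (hy₂'.trans hr₂) hy₂'.ne').2 ⟨.inr rfl, rfl⟩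
  refine ⟨⟨(r₁, y₁), ⟨⟨hr₁, hy₁, hy₁'⟩, hsol₁⟩, ?_⟩, ⟨(r₂, y₂), ⟨⟨hy₂, hy₂', hr₂⟩, hsol₂⟩, ?_⟩, ?_⟩
  · rintro ⟨x, y⟩ ⟨⟨hx, hxy, hy1⟩, h⟩
    obtain ⟨rfl | rfl, rfl⟩ := (hcrit x y hx (hxy.trans hy1) (hx.trans hxy) hy1 hxy.ne).1 h
    exacts [rfl, absurd hxy hy₂'.not_gt]
  · rintro ⟨x, y⟩ ⟨⟨hy, hyx, hx1⟩, h⟩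
    obtain ⟨rfl | rfl, rfl⟩ := (hcrit x y (hy.trans hyx) hx1 hy (hyx.trans hx1) hyx.ne').1 h
    exacts [absurd hyx hy₁.not_gt, rfl]
  · intro x y hx hy hx1 hy1 hyx e₁ e₂
    obtain ⟨hq, rfl⟩ := (isLikCrit_iff (by exact_mod_cast h5.ne') hx hx1 hy hy1 hyx).1 ⟨e₁, e₂⟩
    rcases (likQuad_eq_zero_iff (r₁ := (r₁ : ℂ)) (r₂ := r₂) (by exact_mod_cast ha.ne')
      (by exact_mod_cast hb) (by exact_mod_cast hc)).1 hq with rfl | rfl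
    · exact ⟨(r₁, y₁), .inl ⟨hr₁, hy₁, hy₁'⟩, hsol₁, rfl, by simp [y₁, likPartner]⟩
    · exact ⟨(r₂, y₂), .inr ⟨hy₂, hy₂', hr₂⟩, hsol₂, rfl, by simp [y₂, likPartner]⟩
end

section
/- Let u ∈ ℂ^15 satisfy the E6 u-equations and suppose u11 = 0. Then u4 = u5 = u7 = u8 = u12 = u13 = u14 = u15 = 1, and u1 + u2 = 1, u3 + u6 = 1, u9 + u10 = 1. (This is the cube facet of the E6 pezzotope: the residue of the canonical form at u11 = 0 lives on a product of three copies of M0,4.) -/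
/-!
The variable `u11` occurs in the monomials of exactly eight equations, so `u11 = 0` forces
those eight variables to be `1`. Substituting them, the equations for `u1`, `u3` and `u9`
collapse to the three `M₀,₄` relations.
-/

/-- The fifteen `E6` u-equations on `u : Fin 15 → ℂ` (`u i` stands for `u_{i+1}`). -/
def E6System (u : Fin 15 → ℂ) : Prop :=
  u 0 + u 1 * u 4 * u 6 * u 12 * u 14 = 1 ∧
  u 1 + u 0 * u 3 * u 7 * u 11 * u 13 = 1 ∧
  u 2 + u 3 * u 4 * u 5 * u 13 * u 14 = 1 ∧
  u 3 + u 1 * u 2 * u 8 * u 10 * u 12 = 1 ∧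
  u 4 + u 0 * u 2 * u 9 * u 10 * u 11 = 1 ∧
  u 5 + u 2 * u 6 * u 7 * u 11 * u 12 = 1 ∧
  u 6 + u 0 * u 5 * u 8 * u 10 * u 13 = 1 ∧
  u 7 + u 1 * u 5 * u 9 * u 10 * u 14 = 1 ∧
  u 8 + u 3 * u 6 * u 9 * u 11 * u 14 = 1 ∧
  u 9 + u 4 * u 7 * u 8 * u 12 * u 13 = 1 ∧
  u 10 + u 3 * u 4 * u 6 * u 7 * u 11 * u 12 * u 13 * u 14 = 1 ∧
  u 11 + u 1 * u 4 * u 5 * u 8 * u 10 * u 12 * u 13 * u 14 = 1 ∧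
  u 12 + u 0 * u 3 * u 5 * u 9 * u 10 * u 11 * u 13 * u 14 = 1 ∧
  u 13 + u 1 * u 2 * u 6 * u 9 * u 10 * u 11 * u 12 * u 14 = 1 ∧
  u 14 + u 0 * u 2 * u 7 * u 8 * u 10 * u 11 * u 12 * u 13 = 1

/-- If `u ∈ ℂ¹⁵` satisfies the `E6` u-equations and `u11 = 0` (here `u 10 = 0`), then
`u4 = u5 = u7 = u8 = u12 = u13 = u14 = u15 = 1` and `u1 + u2 = 1`, `u3 + u6 = 1`,
`u9 + u10 = 1`: the cube facet of the `E6` pezzotope. -/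
theorem stmt18 (u : Fin 15 → ℂ) (h : E6System u) (h11 : u 10 = 0) :
    u 3 = 1 ∧ u 4 = 1 ∧ u 6 = 1 ∧ u 7 = 1 ∧ u 11 = 1 ∧ u 12 = 1 ∧ u 13 = 1 ∧ u 14 = 1 ∧
    u 0 + u 1 = 1 ∧ u 2 + u 5 = 1 ∧ u 8 + u 9 = 1 := by
  obtain ⟨e1, -, e3, e4, e5, -, e7, e8, -, e10, -, e12, e13, e14, e15⟩ := h
  simp only [h11, mul_zero, zero_mul, add_zero] at e4 e5 e7 e8 e12 e13 e14 e15
  refine ⟨e4, e5, e7, e8, e12, e13, e14, e15, ?_, ?_, ?_⟩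
  · rw [e5, e7, e13, e15] at e1; linear_combination e1
  · rw [e4, e5, e14, e15] at e3; linear_combination e3
  · rw [e5, e8, e13, e14] at e10; linear_combination e10
end

section
/- Let u ∈ ℂ^15 satisfy the E6 u-equations and suppose u1 = 0. Then u2 = u5 = u7 = u13 = u15 = 1, and the remaining nine coordinates satisfy the u-equations of M0,6: u10 + u8·u9·u14 = 1, u11 + u4·u8·u12·u14 = 1, u6 + u3·u8·u12 = 1, u9 + u4·u10·u12 = 1, u14 + u3·u10·u11·u12 = 1, u8 + u6·u10·u11 = 1, u4 + u3·u9·u11 = 1, u12 + u6·u9·u11·u14 = 1, u3 + u4·u6·u14 = 1. (This is an associahedron facet of the E6 pezzotope: the residue of the canonical form at u1 = 0 lives on the moduli space M0,6.) -/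
/-- If `u ∈ ℂ¹⁵` satisfies the `E6` u-equations and `u1 = 0` (here `u 0 = 0`), then
`u2 = u5 = u7 = u13 = u15 = 1` and the remaining nine coordinates satisfy the
u-equations of `M_{0,6}`: an associahedron facet of the `E6` pezzotope. -/
theorem stmt19 (u : Fin 15 → ℂ) (h : E6System u) (h1 : u 0 = 0) :
    (u 1 = 1 ∧ u 4 = 1 ∧ u 6 = 1 ∧ u 12 = 1 ∧ u 14 = 1) ∧
    (u 9 + u 7 * u 8 * u 13 = 1 ∧
      u 10 + u 3 * u 7 * u 11 * u 13 = 1 ∧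
      u 5 + u 2 * u 7 * u 11 = 1 ∧
      u 8 + u 3 * u 9 * u 11 = 1 ∧
      u 13 + u 2 * u 9 * u 10 * u 11 = 1 ∧
      u 7 + u 5 * u 9 * u 10 = 1 ∧
      u 3 + u 2 * u 8 * u 10 = 1 ∧
      u 11 + u 5 * u 8 * u 10 * u 13 = 1 ∧
      u 2 + u 3 * u 5 * u 13 = 1) := by
  obtain ⟨-, e1, e2, e3, e4, e5, e6, e7, e8, e9, e10, e11, e12, e13, e14⟩ := h
  -- the monomials in the equations for `u 1, u 4, u 6, u 12, u 14` all contain `u 0`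
  simp only [h1, zero_mul, add_zero] at e1 e4 e6 e12 e14
  simp only [e1, e4, e6, e12, e14, one_mul, mul_one] at e2 e3 e5 e7 e8 e9 e10 e11 e13
  exact ⟨⟨e1, e4, e6, e12, e14⟩, e9, e10, e5, e8, e13, e7, e3, e11, e2⟩
end
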